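/- arXiv:2503.07299 — 6 statements merged into one kernel-verified Lean document; each statement's English description precedes it below -/
import Mathlib

section
/- Let q be a prime power, n, k ∈ ℕ with k ≤ n, and let P ∈ GL_n(F_q). Suppose there exists α ∈ F_q such that the eigenspace ker(P − α·I) has dimension at least n − k. Then the conjugacy class Conj(P) = {T P T⁻¹ : T ∈ GL_n(F_q)} satisfies |Conj(P)| · (q−1)^n ≤ q^{2kn + n − k²}. -/
/-!
Orbit–stabilizer gives `|Conj(P)| · |C(P)| = |GL_n| ≤ q^{n²}`, so it suffices to bound the
centralizer from below. Put `N = P - α`, `E = ker N` (of dimension `d ≥ n - k`) and `W = range N`.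
An invertible `f` fixing `W` pointwise with `f - 1` valued in `E` commutes with `N`, hence with
`P`. Choosing a projection `p` onto `E` that sends `W` into `E ⊓ W`, the maps
`1 + (g - 1) p + ζ` are of this kind for every `g ∈ GL(E)` fixing `E ⊓ W` pointwise and every
`ζ : V ⧸ (E ⊔ W) → E`. Orbit–stabilizer for `GL(E)` acting on `Hom(E ⊓ W, E)`, together with
`dim (E ⊓ W) ≤ dim (V ⧸ (E ⊔ W))`, then gives `|C(P)| ≥ |GL(E)| ≥ (q-1)^d q^{d(d-1)}`, and the
bound follows from `(n - k)² ≤ d²`.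
-/

open Module LinearMap

section FiniteField

variable {F : Type*} [Field F] [Fintype F]

theorem sub_one_pow_mul_pow_le_card_generalLinearGroup (E : Type*) [AddCommGroup E] [Module F E]
    [FiniteDimensional F E] :
    (Fintype.card F - 1) ^ finrank F E * Fintype.card F ^ (finrank F E * (finrank F E - 1))
      ≤ Nat.card (GeneralLinearGroup F E) := by
  set q := Fintype.card F
  set d := finrank F E
  rw [← Nat.card_congr (Matrix.GeneralLinearGroup.toLin' (finBasis F E)).toEquiv,
    Matrix.card_GL_field, mul_comm d, pow_mul, ← mul_pow, ← Fin.prod_const]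
  refine Finset.prod_le_prod' fun i _ => ?_
  have hd : d - 1 + 1 = d := Nat.sub_add_cancel (Nat.one_le_of_lt i.2)
  calc (q - 1) * q ^ (d - 1) = q ^ d - q ^ (d - 1) := by
        rw [Nat.sub_mul, one_mul, ← pow_succ', hd]
    _ ≤ q ^ d - q ^ (i : ℕ) :=
        Nat.sub_le_sub_left (Nat.pow_le_pow_right Fintype.card_pos (Nat.le_sub_one_of_lt i.2)) _

theorem card_generalLinearGroup_le_card_stabilizer_mul {E : Type*} [AddCommGroup E] [Module F E]
    [FiniteDimensional F E] (U : Submodule F E) :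
    Nat.card (GeneralLinearGroup F E)
      ≤ Nat.card (MulAction.stabilizer (GeneralLinearGroup F E) (α := U →ₗ[F] E) U.subtype)
        * Fintype.card F ^ (finrank F U * finrank F E) := by
  rw [← Subgroup.card_mul_index,
    MulAction.index_stabilizer (GeneralLinearGroup F E) (U.subtype : U →ₗ[F] E)]
  have : Finite (U →ₗ[F] E) := Module.finite_of_finite F
  gcongr
  calc _ ≤ Nat.card (U →ₗ[F] E) := Set.ncard_le_card _
    _ = _ := by
      rw [Module.natCard_eq_pow_finrank (K := F), finrank_linearMap, Nat.card_eq_fintype_card]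

end FiniteField

section Subspace

variable {F V : Type*} [Field F] [AddCommGroup V] [Module F V]

def fixingShiftingInto (W E : Submodule F V) : Set (GeneralLinearGroup F V) :=
  {f | (∀ w ∈ W, (f : Module.End F V) w = w) ∧ ∀ v, (f : Module.End F V) v - v ∈ E}

theorem Submodule.exists_proj_mapsTo (E W : Submodule F V) :
    ∃ p : V →ₗ[F] E, (∀ x : E, p x = x) ∧ ∀ w ∈ W, (p w : V) ∈ W := by
  obtain ⟨W₁, hdisj, hsup⟩ :=
    IsModularLattice.exists_disjoint_and_sup_eq (inf_le_right : E ⊓ W ≤ W)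
  have hW₁E : Disjoint W₁ E := by
    have : W₁ ≤ W := hsup ▸ le_sup_right
    rw [disjoint_iff_inf_le]
    calc W₁ ⊓ E ≤ W₁ ⊓ (E ⊓ W) :=
          le_inf inf_le_left (le_inf inf_le_right (inf_le_left.trans this))
      _ ≤ ⊥ := hdisj.symm.le_bot
  obtain ⟨K, hW₁K, hKE⟩ := hW₁E.exists_isCompl
  refine ⟨E.projectionOnto K hKE.symm, E.projectionOnto_apply_left _, fun w hw => ?_⟩
  rw [← hsup] at hw
  obtain ⟨u, hu, w₁, hw₁, rfl⟩ := Submodule.mem_sup.mp hw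
  rw [map_add, E.projectionOnto_apply_of_mem_right _ (hW₁K hw₁), add_zero,
    E.projectionOnto_apply_of_mem_left _ hu.1]
  exact hu.2

theorem commute_of_mem_fixingShiftingInto {N : Module.End F V} {f : GeneralLinearGroup F V}
    (hf : f ∈ fixingShiftingInto (range N) (ker N)) : Commute (f : Module.End F V) N := by
  ext v
  have : N ((f : Module.End F V) v) = N v := by rw [← sub_eq_zero, ← map_sub]; exact hf.2 v
  simp [hf.1 (N v) (mem_range_self N v), this]

variable [FiniteDimensional F V]

theorem isUnit_one_add_subtype_comp {E : Submodule F V} (h : V →ₗ[F] E)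
    (hE : Function.Injective fun x : E => x + h x) :
    IsUnit (1 + E.subtype ∘ₗ h : Module.End F V) := by
  have hinj : Function.Injective (1 + E.subtype ∘ₗ h : Module.End F V) := by
    refine (injective_iff_map_eq_zero _).mpr fun v hv => ?_
    replace hv : v + (h v : V) = 0 := hv
    have hvE : v ∈ E := by
      rw [eq_neg_of_add_eq_zero_left hv]
      exact neg_mem (h v).2
    have : (⟨v, hvE⟩ : E) + h v = 0 + h 0 := by
      rw [map_zero, add_zero]
      exact Subtype.ext hv
    exact congrArg Subtype.val (hE this)
  exact (Module.End.isUnit_iff _).mpr ⟨hinj, injective_iff_surjective.mp hinj⟩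

theorem card_stabilizer_mul_card_linearMap_le_card_fixingShiftingInto [Finite F]
    (E W : Submodule F V) :
    Nat.card (MulAction.stabilizer (GeneralLinearGroup F E)
        (α := W.comap E.subtype →ₗ[F] E) (W.comap E.subtype).subtype)
      * Nat.card (V ⧸ (E ⊔ W) →ₗ[F] E)
    ≤ Nat.card (fixingShiftingInto W E) := by
  obtain ⟨p, hpE, hpW⟩ := E.exists_proj_mapsTo W
  set U := W.comap E.subtype
  set stab := MulAction.stabilizer (GeneralLinearGroup F E) (α := U →ₗ[F] E) U.subtype
  let h : stab → (V ⧸ (E ⊔ W) →ₗ[F] E) → V →ₗ[F] E := fun g ζ =>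
    ((g.1 : Module.End F E) - 1) ∘ₗ p + ζ ∘ₗ (E ⊔ W).mkQ
  have h_apply_mem_left (g ζ) (x : E) : h g ζ x = (g.1 : Module.End F E) x - x := by
    have : (E ⊔ W).mkQ x = 0 := (Submodule.Quotient.mk_eq_zero _).mpr (le_sup_left (b := W) x.2)
    simp [h, hpE, this]
  have h_apply_mem_right (g : stab) (ζ) (w : V) (hw : w ∈ W) : h g ζ w = 0 := by
    have hmkQ : (E ⊔ W).mkQ w = 0 :=
      (Submodule.Quotient.mk_eq_zero _).mpr (le_sup_right (a := E) hw)
    have hg : (g.1 : Module.End F E) (p w) = p w :=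
      LinearMap.congr_fun (MulAction.mem_stabilizer_iff.mp g.2) ⟨p w, hpW w hw⟩
    simp [h, hmkQ, hg]
  have hunit (g : stab) (ζ) : IsUnit (1 + E.subtype ∘ₗ h g ζ : Module.End F V) := by
    refine isUnit_one_add_subtype_comp _ fun x y hxy => ?_
    simp only [h_apply_mem_left, add_sub_cancel] at hxy
    exact (g.1.toLinearEquiv).injective hxy
  have : Finite (GeneralLinearGroup F V) := by
    have : Finite (Module.End F V) := Module.finite_of_finite F
    infer_instance
  let Ψ : stab × (V ⧸ (E ⊔ W) →ₗ[F] E) → fixingShiftingInto W E :=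
    fun gζ => ⟨(hunit gζ.1 gζ.2).unit, fun w hw => by simp [h_apply_mem_right _ _ w hw],
      fun v => by simp⟩
  rw [← Nat.card_prod]
  refine Nat.card_le_card_of_injective Ψ ?_
  rintro ⟨g, ζ⟩ ⟨g', ζ'⟩ hΨ
  have hh : h g ζ = h g' ζ' := by
    ext v
    have := LinearMap.congr_fun (congrArg (fun f => ((Subtype.val f : GeneralLinearGroup F V) :
      Module.End F V)) hΨ) v
    simpa [Ψ] using this
  obtain rfl : g = g' := by
    refine Subtype.ext (Units.ext (LinearMap.ext fun x => ?_))
    simpa [h_apply_mem_left] using LinearMap.congr_fun hh x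
  obtain rfl : ζ = ζ' := by
    exact Submodule.linearMap_qext _
      (add_left_cancel (a := ((g.1 : Module.End F E) - 1) ∘ₗ p) hh)
  rfl

theorem card_generalLinearGroup_le_card_fixingShiftingInto [Fintype F] (E W : Submodule F V)
    (hEW : finrank F E + finrank F W ≤ finrank F V) :
    Nat.card (GeneralLinearGroup F E)
      ≤ Nat.card (fixingShiftingInto W E) := by
  set U := W.comap E.subtype
  have hU : finrank F U ≤ finrank F (V ⧸ (E ⊔ W)) := by
    have h₁ : finrank F U = finrank F ↥(E ⊓ W) := by
      rw [← Submodule.finrank_map_subtype_eq, Submodule.map_comap_subtype]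
    have h₂ := Submodule.finrank_sup_add_finrank_inf_eq E W
    have h₃ := Submodule.finrank_quotient_add_finrank (E ⊔ W)
    omega
  have : Finite (V ⧸ (E ⊔ W) →ₗ[F] E) := Module.finite_of_finite F
  calc Nat.card (GeneralLinearGroup F E)
      ≤ Nat.card (MulAction.stabilizer (GeneralLinearGroup F E) (α := U →ₗ[F] E) U.subtype)
        * Fintype.card F ^ (finrank F U * finrank F E) :=
        card_generalLinearGroup_le_card_stabilizer_mul U
    _ ≤ Nat.card (MulAction.stabilizer (GeneralLinearGroup F E) (α := U →ₗ[F] E) U.subtype)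
        * Nat.card (V ⧸ (E ⊔ W) →ₗ[F] E) := by
        gcongr
        rw [Module.natCard_eq_pow_finrank (K := F), finrank_linearMap, Nat.card_eq_fintype_card]
        exact Nat.pow_le_pow_right Fintype.card_pos (Nat.mul_le_mul_right _ hU)
    _ ≤ _ := card_stabilizer_mul_card_linearMap_le_card_fixingShiftingInto E W

end Subspace

theorem card_conj_mul_card_centralizer {G : Type*} [Group G] (P : G) :
    Nat.card {Q : G // ∃ T : G, Q = T * P * T⁻¹} * Nat.card (Subgroup.centralizer {P})
      = Nat.card G := by
  have hconj : {Q : G | ∃ T : G, Q = T * P * T⁻¹} = MulAction.orbit (ConjAct G) P := by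
    ext Q
    rw [Set.mem_ofPred_eq, ConjAct.mem_orbit_conjAct, isConj_comm, isConj_iff]
    simp only [eq_comm]
  have hcent : Nat.card (MulAction.stabilizer (ConjAct G) P)
      = Nat.card (Subgroup.centralizer {P}) := by
    refine Nat.card_congr (Equiv.subtypeEquiv ConjAct.ofConjAct.toEquiv fun g => ?_)
    simp [MulAction.mem_stabilizer_iff, ConjAct.smul_def, Subgroup.mem_centralizer_singleton_iff,
      mul_inv_eq_iff_eq_mul]
  rw [← Set.coe_ofPred, hconj, Nat.card_coe_set_eq, ← MulAction.index_stabilizer, ← hcent,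
    mul_comm, Subgroup.card_mul_index]
  rfl

theorem mul_sub_one_pow_le_zpow {q c : ℝ} {n k d : ℕ} (hq : 1 ≤ q) (hc : 0 ≤ c)
    (hkn : k ≤ n) (hdn : d ≤ n) (hnkd : n ≤ k + d)
    (h : c * ((q - 1) ^ d * q ^ (d * (d - 1))) ≤ q ^ (n * n)) :
    c * (q - 1) ^ n ≤ q ^ (2 * (k : ℤ) * n + n - (k : ℤ) ^ 2) := by
  have hq₀ : 0 < q := by linarith
  have hd : ((d * (d - 1) : ℕ) : ℤ) = (d : ℤ) * d - d := by
    rcases Nat.eq_zero_or_pos d with rfl | hd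
    · simp
    · push_cast [Nat.cast_sub hd]; ring
  have hexp : (n : ℤ) * n + (n - d) ≤ 2 * (k : ℤ) * n + n - (k : ℤ) ^ 2 + (d * d - d) := by
    have h₀ : (0 : ℤ) ≤ n - k := by omega
    have h₁ : (n : ℤ) - k ≤ d := by omega
    nlinarith [mul_le_mul h₁ h₁ h₀ (h₀.trans h₁)]
  have key : c * (q - 1) ^ d * q ^ (n - d) * q ^ ((d : ℤ) * d - d)
      ≤ q ^ (2 * (k : ℤ) * n + n - (k : ℤ) ^ 2) * q ^ ((d : ℤ) * d - d) := by
    calc c * (q - 1) ^ d * q ^ (n - d) * q ^ ((d : ℤ) * d - d)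
        = c * ((q - 1) ^ d * q ^ (d * (d - 1))) * q ^ (n - d) := by
          rw [← hd, zpow_natCast]; ring
      _ ≤ q ^ (n * n) * q ^ (n - d) := by gcongr
      _ = q ^ ((n : ℤ) * n + (n - d)) := by
          rw [zpow_add₀ hq₀.ne', ← Nat.cast_sub hdn, zpow_natCast, ← Nat.cast_mul,
            zpow_natCast]
      _ ≤ q ^ (2 * (k : ℤ) * n + n - (k : ℤ) ^ 2 + (d * d - d)) :=
          zpow_le_zpow_right₀ hq hexp
      _ = _ := zpow_add₀ hq₀.ne' _ _
  calc c * (q - 1) ^ n = c * (q - 1) ^ d * (q - 1) ^ (n - d) := by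
        rw [mul_assoc, ← pow_add, Nat.add_sub_cancel' hdn]
    _ ≤ c * (q - 1) ^ d * q ^ (n - d) := by gcongr; linarith
    _ ≤ _ := le_of_mul_le_mul_right key (by positivity)

section Matrix

variable {F : Type*} [Field F] [Fintype F] {ι : Type*} [Fintype ι] [DecidableEq ι]

theorem card_generalLinearGroup_ker_le_card_centralizer (P : GL ι F) (α : F) :
    Nat.card (GeneralLinearGroup F (ker (Matrix.toLin' ((P : Matrix ι ι F) - α • 1))))
      ≤ Nat.card (Subgroup.centralizer {P}) := by
  set N := Matrix.toLin' ((P : Matrix ι ι F) - α • 1) with hN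
  have hP : (Matrix.GeneralLinearGroup.toLin P : Module.End F (ι → F)) = N + α • 1 := by
    rw [Matrix.GeneralLinearGroup.coe_toLin, ← Matrix.toLin'_apply', hN, map_sub, map_smul,
      Matrix.toLin'_one]
    exact (sub_add_cancel _ _).symm
  have hdim : finrank F (ker N) + finrank F (range N) ≤ finrank F (ι → F) := by
    rw [add_comm, finrank_range_add_finrank_ker]
  calc _ ≤ Nat.card (fixingShiftingInto (range N) (ker N)) :=
        card_generalLinearGroup_le_card_fixingShiftingInto _ _ hdim
    _ ≤ _ := by
      refine Nat.card_le_card_of_injective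
        (fun f => ⟨Matrix.GeneralLinearGroup.toLin.symm f.1, ?_⟩) fun f g hfg => ?_
      · rw [Subgroup.mem_centralizer_singleton_iff,
          ← Matrix.GeneralLinearGroup.toLin.injective.eq_iff, map_mul, map_mul,
          MulEquiv.apply_symm_apply]
        refine Units.ext ?_
        rw [Units.val_mul, Units.val_mul, hP]
        exact ((commute_of_mem_fixingShiftingInto f.2).add_right
          ((Commute.one_right _).smul_right α)).eq
      · exact Subtype.ext
          (Matrix.GeneralLinearGroup.toLin.symm.injective (congrArg Subtype.val hfg))

end Matrix

theorem Matrix.card_GL_le {R ι : Type*} [CommRing R] [Fintype R] [Fintype ι] [DecidableEq ι] :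
    Nat.card (GL ι R) ≤ Fintype.card R ^ (Fintype.card ι * Fintype.card ι) := by
  calc Nat.card (GL ι R) ≤ Nat.card (Matrix ι ι R) :=
        Nat.card_le_card_of_injective _ Units.val_injective
    _ = _ := by
        rw [Nat.card_eq_fintype_card]
        exact Fintype.card_fun.trans (by rw [Fintype.card_fun, ← pow_mul])

theorem stmt_10_general (F : Type) [Field F] [Fintype F] (n k : ℕ) (hk : k ≤ n)
    (P : GL (Fin n) F)
    (hP : ∃ α : F, n - k ≤ Module.finrank F
        (LinearMap.ker (Matrix.toLin' ((P : Matrix (Fin n) (Fin n) F)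
          - α • (1 : Matrix (Fin n) (Fin n) F))))) :
    (Nat.card {Q : GL (Fin n) F // ∃ T : GL (Fin n) F, Q = T * P * T⁻¹} : ℝ)
        * ((Fintype.card F : ℝ) - 1) ^ n
      ≤ (Fintype.card F : ℝ) ^ (2 * (k : ℤ) * n + n - (k : ℤ) ^ 2) := by
  obtain ⟨α, hα⟩ := hP
  set q := Fintype.card F
  set c := Nat.card {Q : GL (Fin n) F // ∃ T : GL (Fin n) F, Q = T * P * T⁻¹}
  set E := ker (Matrix.toLin' ((P : Matrix (Fin n) (Fin n) F) - α • 1))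
  have hq : 1 ≤ q := Fintype.card_pos
  have hdn : finrank F E ≤ n := (Submodule.finrank_le E).trans_eq (by simp)
  have hbound :
      c * ((q - 1) ^ finrank F E * q ^ (finrank F E * (finrank F E - 1))) ≤ q ^ (n * n) :=
    calc _ ≤ c * Nat.card (Subgroup.centralizer {P}) :=
          Nat.mul_le_mul_left _ ((sub_one_pow_mul_pow_le_card_generalLinearGroup E).trans
            (card_generalLinearGroup_ker_le_card_centralizer P α))
      _ = Nat.card (GL (Fin n) F) := card_conj_mul_card_centralizer P
      _ ≤ q ^ (n * n) := by simpa using Matrix.card_GL_le (R := F) (ι := Fin n)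
  refine mul_sub_one_pow_le_zpow (by exact_mod_cast hq) (Nat.cast_nonneg c) hk hdn (by omega) ?_
  exact_mod_cast hbound

/-- if `P ∈ GL_n(F_q)` has an eigenspace of dimension at least `n − k` for some
eigenvalue `α ∈ F_q`, then `|Conj(P)| · (q−1)^n ≤ q^{2kn + n − k²}`. -/
theorem stmt_10 (F : Type) [Field F] [Fintype F] [DecidableEq F] (n k : ℕ) (hk : k ≤ n)
    (P : GL (Fin n) F)
    (hP : ∃ α : F, n - k ≤ Module.finrank F
        (LinearMap.ker (Matrix.toLin' ((P : Matrix (Fin n) (Fin n) F)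
          - α • (1 : Matrix (Fin n) (Fin n) F))))) :
    (Nat.card {Q : GL (Fin n) F // ∃ T : GL (Fin n) F, Q = T * P * T⁻¹} : ℝ)
        * ((Fintype.card F : ℝ) - 1) ^ n
      ≤ (Fintype.card F : ℝ) ^ (2 * (k : ℤ) * n + n - (k : ℤ) ^ 2) :=
  stmt_10_general F n k hk P hP
end

section
/- Let F be a finite field, n, m ∈ ℕ, and let P : F^n → F^n and Q : F^m → F^m be invertible F-linear maps. Suppose F^n = U₁ ⊕ U₂ where U₂ is P-invariant, and U₁ has an ordered basis (a₁, …, a_ℓ) such that P(a_i) = a_{i+1} for all 1 ≤ i < ℓ and P(a_ℓ) ∈ U₁. Then for every integer t with 1 ≤ t ≤ ℓ, the dimension of Fix(P,Q) is at most n²m − (t−1)(n−t)m. -/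
/-!
For `φ ∈ Fix(P,Q)` the left kernel `{x | φ (x ⊗ ·) = 0}` is `P`-invariant, because
`φ (P x ⊗ v) = Q (φ (x ⊗ P⁻¹ v))`. It therefore contains `a₁, …, a_t = P^{t-1} a₁` as soon as
it contains `a₁`, so `φ` is determined by `φ (a₁ ⊗ ·)` and by its restriction to `D ⊗ F^n`,
where `D` is a complement of `span (a₁, …, a_t)`. Hence
`dim Fix(P,Q) ≤ nm + (n - t)nm = n²m - (t - 1)nm ≤ n²m - (t - 1)(n - t)m`.
-/

open TensorProduct

/-- The subspace `Fix(P,Q)` of bilinear maps `φ : F^n × F^n → F^m` (presented as linear maps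
on the tensor square, which identifies bilinear maps with linear maps) satisfying
`φ(P v₁, P v₂) = Q (φ v₁ v₂)` for all `v₁, v₂`. -/
def fixSubmodule {F : Type*} [Field F] {n m : ℕ}
    (P : (Fin n → F) ≃ₗ[F] (Fin n → F)) (Q : (Fin m → F) ≃ₗ[F] (Fin m → F)) :
    Submodule F ((Fin n → F) ⊗[F] (Fin n → F) →ₗ[F] (Fin m → F)) where
  carrier := {φ | ∀ v₁ v₂ : Fin n → F, φ (P v₁ ⊗ₜ[F] P v₂) = Q (φ (v₁ ⊗ₜ[F] v₂))}
  add_mem' := by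
    intro a b ha hb v₁ v₂
    simp [ha v₁ v₂, hb v₁ v₂]
  zero_mem' := by intro v₁ v₂; simp
  smul_mem' := by
    intro c a ha v₁ v₂
    simp [ha v₁ v₂]

section KerCurry

variable {R V W : Type*} [CommRing R] [AddCommGroup V] [Module R V] [AddCommGroup W]
  [Module R W] {φ : V ⊗[R] V →ₗ[R] W} {P : V ≃ₗ[R] V} {Q : W →ₗ[R] W}

theorem apply_mem_ker_curry (hφ : ∀ v₁ v₂, φ (P v₁ ⊗ₜ P v₂) = Q (φ (v₁ ⊗ₜ v₂))) {x : V}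
    (hx : x ∈ LinearMap.ker (curry φ)) : P x ∈ LinearMap.ker (curry φ) := by
  rw [LinearMap.mem_ker] at hx ⊢
  ext v
  rw [curry_apply, ← P.apply_symm_apply v, hφ, ← curry_apply, hx, LinearMap.zero_apply,
    map_zero, LinearMap.zero_apply]

theorem iterate_mem_ker_curry (hφ : ∀ v₁ v₂, φ (P v₁ ⊗ₜ P v₂) = Q (φ (v₁ ⊗ₜ v₂))) {x : V}
    (hx : x ∈ LinearMap.ker (curry φ)) (k : ℕ) : (⇑P)^[k] x ∈ LinearMap.ker (curry φ) := by
  induction k with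
  | zero => exact hx
  | succ k ih => rw [Function.iterate_succ_apply']; exact apply_mem_ker_curry hφ ih

theorem eq_zero_of_mem_ker_curry (hφ : ∀ v₁ v₂, φ (P v₁ ⊗ₜ P v₂) = Q (φ (v₁ ⊗ₜ v₂)))
    {x : V} {t : ℕ} {D : Submodule R V}
    (hsup : Submodule.span R (Set.range fun i : Fin t => (⇑P)^[i] x) ⊔ D = ⊤)
    (hx : x ∈ LinearMap.ker (curry φ)) (hD : D ≤ LinearMap.ker (curry φ)) : φ = 0 := by
  suffices LinearMap.ker (curry φ) = ⊤ from
    curry_injective (LinearMap.ker_eq_top.1 this)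
  rw [eq_top_iff, ← hsup, sup_le_iff, Submodule.span_le]
  refine ⟨?_, hD⟩
  rintro _ ⟨i, rfl⟩
  exact iterate_mem_ker_curry hφ hx i

end KerCurry

theorem Fin.eq_iterate_of_succ {α : Type*} {ℓ : ℕ} {f : α → α} {a : Fin ℓ → α}
    (h : ∀ i : Fin ℓ, ∀ h : i.1 + 1 < ℓ, f (a i) = a ⟨i.1 + 1, h⟩) (i : ℕ) (hi : i < ℓ) :
    a ⟨i, hi⟩ = f^[i] (a ⟨0, by omega⟩) := by
  induction i with
  | zero => rfl
  | succ i ih => rw [Function.iterate_succ_apply', ← ih (by omega), h ⟨i, by omega⟩ hi]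

theorem finrank_fixSubmodule_le {F : Type*} [Field F] {n m : ℕ}
    (P : (Fin n → F) ≃ₗ[F] (Fin n → F)) (Q : (Fin m → F) ≃ₗ[F] (Fin m → F))
    (x : Fin n → F) (t : ℕ) (hx : LinearIndependent F fun i : Fin t => (⇑P)^[i] x) :
    Module.finrank F (fixSubmodule P Q) ≤ n * m + (n - t) * n * m := by
  obtain ⟨D, hD⟩ := (Submodule.span F (Set.range fun i : Fin t => (⇑P)^[i] x)).exists_isCompl
  have hdimD : Module.finrank F D = n - t := by
    have := Submodule.finrank_add_eq_of_isCompl hD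
    rw [finrank_span_eq_card hx, Fintype.card_fin, Module.finrank_fin_fun] at this
    omega
  let T := ((Fin n → F) →ₗ[F] (Fin m → F)) × (D →ₗ[F] (Fin n → F) →ₗ[F] (Fin m → F))
  let restrict : fixSubmodule P Q →ₗ[F] T :=
    ((LinearMap.applyₗ x).prod (LinearMap.lcomp F _ D.subtype)) ∘ₗ lcurry (.id F) _ _ _ ∘ₗ
      (fixSubmodule P Q).subtype
  have hrestrict : Function.Injective restrict := by
    refine (LinearMap.ker_eq_bot (M := fixSubmodule P Q) (M₂ := T) (f := restrict)).1
      (eq_bot_iff.2 ?_)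
    rintro ⟨φ, hφ⟩ hker
    obtain ⟨hxφ, hDφ⟩ := Prod.ext_iff.1 (LinearMap.mem_ker.1 hker)
    have := eq_zero_of_mem_ker_curry (Q := Q.toLinearMap) hφ hD.sup_eq_top hxφ
      fun d hd => LinearMap.congr_fun hDφ ⟨d, hd⟩
    simp [this]
  calc Module.finrank F (fixSubmodule P Q)
      ≤ Module.finrank F T := LinearMap.finrank_le_finrank_of_injective hrestrict
    _ = n * m + (n - t) * n * m := by simp [T, Module.finrank_linearMap, hdimD, mul_assoc]

theorem stmt_11_general (F : Type) [Field F] (n m ℓ : ℕ)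
    (P : (Fin n → F) ≃ₗ[F] (Fin n → F)) (Q : (Fin m → F) ≃ₗ[F] (Fin m → F))
    (a : Fin ℓ → (Fin n → F)) (hind : LinearIndependent F a)
    (hchain : ∀ i : Fin ℓ, ∀ h : i.1 + 1 < ℓ, P (a i) = a ⟨i.1 + 1, h⟩) :
    ∀ t : ℕ, 1 ≤ t → t ≤ ℓ →
      (Module.finrank F (fixSubmodule P Q) : ℤ)
        ≤ (n : ℤ) ^ 2 * m - ((t : ℤ) - 1) * ((n : ℤ) - t) * m := by
  intro t ht1 htl
  have hx : LinearIndependent F fun i : Fin t => (⇑P)^[i] (a ⟨0, by omega⟩) := by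
    convert hind.comp (Fin.castLE htl) (Fin.castLE_injective htl) with i
    exact (Fin.eq_iterate_of_succ hchain i (by omega)).symm
  have htn : t ≤ n := by simpa using hx.fintype_card_le_finrank
  have hbound := finrank_fixSubmodule_le P Q _ t hx
  zify [htn] at hbound
  linarith [mul_nonneg (mul_nonneg (by omega : (0 : ℤ) ≤ t - 1) (by omega : (0 : ℤ) ≤ t))
    (Int.natCast_nonneg m)]

/-- if `F^n = U₁ ⊕ U₂` with `U₂` a `P`-invariant subspace and `U₁` spanned by a
chain `a₁, …, a_ℓ` with `P aᵢ = aᵢ₊₁` for `i < ℓ` and `P a_ℓ ∈ U₁`, then for every integer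
`1 ≤ t ≤ ℓ`, `dim Fix(P,Q) ≤ n²m − (t−1)(n−t)m`. -/
theorem stmt_11 (F : Type) [Field F] [Fintype F] (n m ℓ : ℕ)
    (P : (Fin n → F) ≃ₗ[F] (Fin n → F)) (Q : (Fin m → F) ≃ₗ[F] (Fin m → F))
    (U₁ U₂ : Submodule F (Fin n → F)) (hcompl : IsCompl U₁ U₂)
    (hU₂ : ∀ x ∈ U₂, P x ∈ U₂)
    (a : Fin ℓ → (Fin n → F)) (hind : LinearIndependent F a)
    (hspan : Submodule.span F (Set.range a) = U₁)
    (hchain : ∀ i : Fin ℓ, ∀ h : i.1 + 1 < ℓ, P (a i) = a ⟨i.1 + 1, h⟩)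
    (hlast : ∀ h : 0 < ℓ, P (a ⟨ℓ - 1, Nat.sub_lt h Nat.one_pos⟩) ∈ U₁) :
    ∀ t : ℕ, 1 ≤ t → t ≤ ℓ →
      (Module.finrank F (fixSubmodule P Q) : ℤ)
        ≤ (n : ℤ) ^ 2 * m - ((t : ℤ) - 1) * ((n : ℤ) - t) * m :=
  stmt_11_general F n m ℓ P Q a hind hchain
end

section
/- Let F be a finite field, n, m ∈ ℕ, and let P : F^n → F^n and Q : F^m → F^m be invertible F-linear maps. Suppose F^m = X₁ ⊕ X₂ where X₂ is Q-invariant, and X₁ has an ordered basis (b₁, …, b_ℓ) such that Q(b_k) = b_{k+1} for all 1 ≤ k < ℓ and Q(b_ℓ) ∈ X₁. Then the dimension of Fix(P,Q) is at most n²m − n²(ℓ−1). -/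
open TensorProduct

/-! Precomposition with the invertible map `P ⊗ P` does not change the image of `φ`, so every
`φ ∈ Fix(P,Q)` has `Q`-stable image. A `Q`-stable subspace `U` of `span(b₁, …, b_{ℓ-1})` is zero:
applying `Q` shifts the chain, so by linear independence `U ⊆ span(b_{j+1}, …, b_{ℓ-1})` implies
`U ⊆ span(b_{j+2}, …, b_{ℓ-1})`. Hence reducing modulo `span(b₁, …, b_{ℓ-1})` is injective on
`Fix(P,Q)`, which bounds its dimension by `n² (m - (ℓ - 1))`. -/

open Submodule Module

theorem LinearIndependent.span_image_inf_span_image {ι R M : Type*} [Ring R] [AddCommGroup M]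
    [Module R M] {v : ι → M} (hv : LinearIndependent R v) (s t : Set ι) :
    span R (v '' s) ⊓ span R (v '' t) = span R (v '' (s ∩ t)) := by
  refine le_antisymm ?_ (le_inf (span_mono (Set.image_mono Set.inter_subset_left))
    (span_mono (Set.image_mono Set.inter_subset_right)))
  rintro x ⟨hs, ht⟩
  obtain ⟨l, hl, rfl⟩ := Finsupp.mem_span_image_iff_linearCombination R |>.mp hs
  obtain ⟨l', hl', hll'⟩ := Finsupp.mem_span_image_iff_linearCombination R |>.mp ht
  rw [hv hll'] at hl'
  exact Finsupp.mem_span_image_iff_linearCombination R |>.mpr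
    ⟨l, by rw [Finsupp.supported_inter]; exact ⟨hl, hl'⟩, rfl⟩

section Chain

variable {R M : Type*} [Ring R] [AddCommGroup M] [Module R M] {ℓ : ℕ}

theorem Submodule.eq_bot_of_le_map_of_le_span_chain (Q : M →ₗ[R] M) (b : Fin ℓ → M)
    (hb : LinearIndependent R b)
    (hchain : ∀ k : Fin ℓ, ∀ h : k.1 + 1 < ℓ, Q (b k) = b ⟨k.1 + 1, h⟩)
    (U : Submodule R M) (hUQ : U ≤ U.map Q) (hUb : U ≤ span R (b '' {i | i.1 < ℓ - 1})) :
    U = ⊥ := by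
  have hshrink : ∀ j, U ≤ span R (b '' {i | j ≤ i.1 ∧ i.1 < ℓ - 1}) := by
    intro j
    induction j with
    | zero => simpa using hUb
    | succ j ih =>
      have hshift : U.map Q ≤ span R (b '' {i | j + 1 ≤ i.1}) := by
        refine (map_mono ih).trans ((map_span_le _ _ _).mpr ?_)
        rintro _ ⟨i, ⟨hji, hi⟩, rfl⟩
        rw [hchain i (by omega)]
        exact subset_span ⟨_, by simpa using hji, rfl⟩
      have := le_inf (hUQ.trans hshift) hUb
      rwa [hb.span_image_inf_span_image, ← Set.ofPred_and] at this
  have hempty : {i : Fin ℓ | ℓ ≤ i.1 ∧ i.1 < ℓ - 1} = ∅ := by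
    ext i; simp only [Set.mem_ofPred_eq, Set.mem_empty_iff_false, iff_false]; omega
  simpa [hempty] using hshrink ℓ

theorem LinearMap.eq_zero_of_comp_eq_of_range_le_span_chain {V : Type*} [AddCommGroup V]
    [Module R V] (A : V →ₗ[R] V) (hA : Function.Surjective A) (Q : M →ₗ[R] M) (b : Fin ℓ → M)
    (hb : LinearIndependent R b)
    (hchain : ∀ k : Fin ℓ, ∀ h : k.1 + 1 < ℓ, Q (b k) = b ⟨k.1 + 1, h⟩)
    (φ : V →ₗ[R] M) (hφ : φ ∘ₗ A = Q ∘ₗ φ) (hrange : range φ ≤ span R (b '' {i | i.1 < ℓ - 1})) :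
    φ = 0 := by
  have hQ : range φ ≤ (range φ).map Q := by
    rw [← range_comp, ← hφ, range_comp_of_range_eq_top _ (range_eq_top.mpr hA)]
  exact range_eq_bot.mp (eq_bot_of_le_map_of_le_span_chain Q b hb hchain _ hQ hrange)

end Chain

theorem finrank_le_of_forall_comp_eq_of_chain {K V W : Type*} {ℓ : ℕ} [Field K] [AddCommGroup V]
    [Module K V] [FiniteDimensional K V] [AddCommGroup W] [Module K W] [FiniteDimensional K W]
    (A : V →ₗ[K] V) (hA : Function.Surjective A) (Q : W →ₗ[K] W) (b : Fin ℓ → W)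
    (hb : LinearIndependent K b)
    (hchain : ∀ k : Fin ℓ, ∀ h : k.1 + 1 < ℓ, Q (b k) = b ⟨k.1 + 1, h⟩)
    (S : Submodule K (V →ₗ[K] W)) (hS : ∀ φ ∈ S, φ ∘ₗ A = Q ∘ₗ φ) :
    finrank K S ≤ finrank K V * (finrank K W - (ℓ - 1)) := by
  have hY : finrank K (span K (b '' {i | i.1 < ℓ - 1})) = ℓ - 1 := by
    rw [Set.image_eq_range]
    exact (finrank_span_eq_card (hb.comp _ Subtype.val_injective)).trans
      (by simp [Fintype.card_subtype, Fin.card_filter_val_lt])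
  set Y := span K (b '' {i | i.1 < ℓ - 1})
  have hinj : Function.Injective (LinearMap.llcomp K V W (W ⧸ Y) Y.mkQ ∘ₗ S.subtype) := by
    rw [← LinearMap.ker_eq_bot, LinearMap.ker_eq_bot']
    intro φ hφ
    have hrange : LinearMap.range φ.1 ≤ Y := by
      rw [← Y.ker_mkQ, LinearMap.range_le_ker_iff]
      exact hφ
    exact Subtype.ext <| LinearMap.eq_zero_of_comp_eq_of_range_le_span_chain A hA Q b hb hchain
      φ.1 (hS φ.1 φ.2) hrange
  calc finrank K S ≤ finrank K (V →ₗ[K] W ⧸ Y) := LinearMap.finrank_le_finrank_of_injective hinj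
    _ = finrank K V * (finrank K W - (ℓ - 1)) := by
      rw [finrank_linearMap, Submodule.finrank_quotient, hY]

theorem stmt_12_general (F : Type) [Field F] (n m ℓ : ℕ)
    (P : (Fin n → F) ≃ₗ[F] (Fin n → F)) (Q : (Fin m → F) ≃ₗ[F] (Fin m → F))
    (b : Fin ℓ → (Fin m → F)) (hind : LinearIndependent F b)
    (hchain : ∀ k : Fin ℓ, ∀ h : k.1 + 1 < ℓ, Q (b k) = b ⟨k.1 + 1, h⟩) :
    (Module.finrank F (fixSubmodule P Q) : ℤ)
      ≤ (n : ℤ) ^ 2 * m - (n : ℤ) ^ 2 * ((ℓ : ℤ) - 1) := by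
  have hfix : ∀ φ ∈ fixSubmodule P Q, φ ∘ₗ (TensorProduct.congr P P).toLinearMap = Q ∘ₗ φ :=
    fun φ hφ => TensorProduct.ext' hφ
  have hbound := finrank_le_of_forall_comp_eq_of_chain _ (TensorProduct.congr P P).surjective
    Q.toLinearMap b hind hchain _ hfix
  rw [finrank_tensorProduct, finrank_fin_fun, finrank_fin_fun] at hbound
  have hℓm : ℓ ≤ m := by simpa using hind.fintype_card_le_finrank
  zify [show ℓ - 1 ≤ m by omega] at hbound
  -- at `ℓ = 0` the truncated `ℓ - 1 = 0` makes the bound in `hbound` only stronger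
  have hℓ : (ℓ : ℤ) - 1 ≤ ((ℓ - 1 : ℕ) : ℤ) := by omega
  nlinarith [mul_le_mul_of_nonneg_left hℓ (sq_nonneg (n : ℤ))]

/-- if `F^m = X₁ ⊕ X₂` with `X₂` a `Q`-invariant subspace and `X₁` spanned by a
chain `b₁, …, b_ℓ` with `Q b_k = b_{k+1}` for `k < ℓ` and `Q b_ℓ ∈ X₁`, then
`dim Fix(P,Q) ≤ n²m − n²(ℓ−1)`. -/
theorem stmt_12 (F : Type) [Field F] [Fintype F] (n m ℓ : ℕ)
    (P : (Fin n → F) ≃ₗ[F] (Fin n → F)) (Q : (Fin m → F) ≃ₗ[F] (Fin m → F))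
    (X₁ X₂ : Submodule F (Fin m → F)) (hcompl : IsCompl X₁ X₂)
    (hX₂ : ∀ x ∈ X₂, Q x ∈ X₂)
    (b : Fin ℓ → (Fin m → F)) (hind : LinearIndependent F b)
    (hspan : Submodule.span F (Set.range b) = X₁)
    (hchain : ∀ k : Fin ℓ, ∀ h : k.1 + 1 < ℓ, Q (b k) = b ⟨k.1 + 1, h⟩)
    (hlast : ∀ h : 0 < ℓ, Q (b ⟨ℓ - 1, Nat.sub_lt h Nat.one_pos⟩) ∈ X₁) :
    (Module.finrank F (fixSubmodule P Q) : ℤ)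
      ≤ (n : ℤ) ^ 2 * m - (n : ℤ) ^ 2 * ((ℓ : ℤ) - 1) :=
  stmt_12_general F n m ℓ P Q b hind hchain
end

section
/- Let F be a finite field, n, m, E ∈ ℕ, and let P : F^n → F^n and Q : F^m → F^m be invertible F-linear maps. Suppose F^n = U₁ ⊕ ⋯ ⊕ U_E ⊕ U′ where each U_i and U′ is P-invariant, and for each i ∈ {1,…,E} the subspace U_i has an ordered basis (a^{(i)}_1, …, a^{(i)}_{s_i}) with s_i ≥ 2 and P(a^{(i)}_j) = a^{(i)}_{j+1} for all 1 ≤ j < s_i. Let ℓ₀ = s_1 + ⋯ + s_E. Then the dimension of Fix(P,Q) is at most n²m − E·(n−ℓ₀)·m. -/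
/-!
A fixed map satisfies `φ (a⁽ⁱ⁾₂ ⊗ u) = Q (φ (a⁽ⁱ⁾₁ ⊗ P⁻¹ u))` for every chain `i` and every
`u ∈ U′`, because `P a⁽ⁱ⁾₁ = a⁽ⁱ⁾₂`. These `E · dim U′ · m` linear conditions are independent:
the vectors `a⁽ⁱ⁾₁, a⁽ⁱ⁾₂` are jointly linearly independent, so the values of `φ (a⁽ⁱ⁾₂ ⊗ ·)`
on `U′` can be prescribed at will while `φ (a⁽ⁱ⁾₁ ⊗ ·)` vanishes. Hence `Fix(P,Q)` lies in the
kernel of a surjection onto a space of dimension `E · (n − ℓ₀) · m`.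
-/

open TensorProduct

section Ring

variable {R M ι : Type*} [Ring R] [AddCommGroup M] [Module R M]

theorem iSupIndep.linearIndependent_sigma {A : ι → Submodule R M} (hA : iSupIndep A)
    {η : ι → Type*} {v : ∀ i, η i → M} (hv : ∀ i, LinearIndependent R (v i))
    (hvA : ∀ i j, v i j ∈ A i) :
    LinearIndependent R fun x : Σ i, η i => v x.1 x.2 := by
  have hspan : ∀ i, Submodule.span R (Set.range (v i)) ≤ A i := fun i =>
    Submodule.span_le.mpr (Set.range_subset_iff.mpr (hvA i))
  refine linearIndependent_iUnion_finite hv fun i t _ hit => ?_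
  exact (hA.disjoint_biSup hit).mono (hspan i) (iSup₂_mono fun j _ => hspan j)

theorem iSupIndep.linearIndependent_sumElim {A : ι → Submodule R M} (hA : iSupIndep A)
    {η : ι → Type*} {v : ∀ i, η i → M} (hv : ∀ i, LinearIndependent R (v i))
    (hvA : ∀ i j, v i j ∈ A i) (j₀ j₁ : ∀ i, η i) (hj : ∀ i, j₀ i ≠ j₁ i) :
    LinearIndependent R (Sum.elim (fun i => v i (j₀ i)) (fun i => v i (j₁ i))) := by
  let pick : ι ⊕ ι → Σ i, η i := Sum.elim (fun i => ⟨i, j₀ i⟩) (fun i => ⟨i, j₁ i⟩)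
  have hpick : pick.Injective := by
    rintro (i | i) (k | k) h <;> simp only [pick, Sum.elim_inl, Sum.elim_inr, Sigma.mk.injEq] at h
    · obtain ⟨rfl, -⟩ := h; rfl
    · obtain ⟨rfl, h⟩ := h; exact absurd (eq_of_heq h) (hj i)
    · obtain ⟨rfl, h⟩ := h; exact absurd (eq_of_heq h).symm (hj i)
    · obtain ⟨rfl, -⟩ := h; rfl
  convert (hA.linearIndependent_sigma hv hvA).comp pick hpick using 1
  ext (i | i) <;> rfl

end Ring

section Field

variable {K V W ι : Type*} [Field K] [AddCommGroup V] [Module K V] [AddCommGroup W] [Module K W]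

theorem LinearIndependent.exists_linearMap_apply_eq {v : ι → V} (hv : LinearIndependent K v)
    (w : ι → W) : ∃ f : V →ₗ[K] W, ∀ i, f (v i) = w i := by
  obtain ⟨f, hf⟩ := ((Module.Basis.span hv).constr K w).exists_extend
  refine ⟨f, fun i => ?_⟩
  have := LinearMap.congr_fun hf (Module.Basis.span hv i)
  rwa [LinearMap.comp_apply, Module.Basis.constr_basis, Submodule.subtype_apply,
    Module.Basis.span_apply] at this

theorem DirectSum.IsInternal.finrank_eq_sum [Fintype ι] [DecidableEq ι] [FiniteDimensional K V]
    {A : ι → Submodule K V} (hA : DirectSum.IsInternal A) :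
    Module.finrank K V = ∑ i, Module.finrank K (A i) := by
  rw [Module.finrank_eq_card_basis (hA.collectedBasis fun i => Module.finBasis K (A i))]
  simp

theorem finrank_eq_sum_add_finrank_of_iSupIndep [Fintype ι] [FiniteDimensional K V]
    {A : ι → Submodule K V} {B : Submodule K V}
    (hindep : iSupIndep (Sum.elim A fun _ : Unit => B))
    (hsup : ⨆ k, Sum.elim A (fun _ : Unit => B) k = ⊤) :
    Module.finrank K V = ∑ i, Module.finrank K (A i) + Module.finrank K B := by
  classical
  have hinternal := (DirectSum.isInternal_submodule_iff_iSupIndep_and_iSup_eq_top _).mpr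
    ⟨hindep, hsup⟩
  rw [hinternal.finrank_eq_sum, Fintype.sum_sum_type, Fintype.sum_unique (ι := Unit)]
  rfl

theorem Submodule.finrank_add_finrank_le_of_le_ker [FiniteDimensional K V] {f : V →ₗ[K] W}
    (hf : Function.Surjective f) {p : Submodule K V} (hp : p ≤ LinearMap.ker f) :
    Module.finrank K p + Module.finrank K W ≤ Module.finrank K V := by
  have hrank := f.finrank_range_add_finrank_ker
  rw [LinearMap.range_eq_top.mpr hf, finrank_top] at hrank
  have := Submodule.finrank_mono hp
  omega

def chainConstraint (T : V →ₗ[K] V) (Q : W →ₗ[K] W) (x y : ι → V) (U : Submodule K V) :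
    (V ⊗[K] V →ₗ[K] W) →ₗ[K] (ι → U →ₗ[K] W) where
  toFun φ i := (curry φ (y i) - Q ∘ₗ curry φ (x i) ∘ₗ T) ∘ₗ U.subtype
  map_add' φ ψ := by ext; simp; abel
  map_smul' c φ := by ext; simp [smul_sub]

theorem chainConstraint_apply (T : V →ₗ[K] V) (Q : W →ₗ[K] W) (x y : ι → V) (U : Submodule K V)
    (φ : V ⊗[K] V →ₗ[K] W) (i : ι) (u : U) :
    chainConstraint T Q x y U φ i u = φ (y i ⊗ₜ u) - Q (φ (x i ⊗ₜ T u)) := rfl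

theorem chainConstraint_surjective (T : V →ₗ[K] V) (Q : W →ₗ[K] W) {x y : ι → V}
    (hxy : LinearIndependent K (Sum.elim x y)) (U : Submodule K V) :
    Function.Surjective (chainConstraint T Q x y U) := by
  intro g
  choose G hG using fun i => (g i).exists_extend
  obtain ⟨L, hL⟩ := hxy.exists_linearMap_apply_eq (Sum.elim 0 G)
  refine ⟨lift L, funext fun i => LinearMap.ext fun u => ?_⟩
  have hx := hL (Sum.inl i)
  have hy := hL (Sum.inr i)
  simp only [Sum.elim_inl, Sum.elim_inr] at hx hy
  simp [chainConstraint_apply, hx, hy, ← hG i]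

end Field

theorem fixSubmodule_le_ker_chainConstraint {F : Type*} [Field F] {n m : ℕ} {ι : Type*}
    (P : (Fin n → F) ≃ₗ[F] (Fin n → F)) (Q : (Fin m → F) ≃ₗ[F] (Fin m → F))
    {x y : ι → Fin n → F} (hxy : ∀ i, P (x i) = y i) (U : Submodule F (Fin n → F)) :
    fixSubmodule P Q ≤ LinearMap.ker (chainConstraint P.symm.toLinearMap Q.toLinearMap x y U) := by
  intro φ hφ
  ext i u
  have := hφ (x i) (P.symm u)
  rw [hxy, P.apply_symm_apply] at this
  simp [chainConstraint_apply, this]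

theorem stmt_13_general (F : Type) [Field F] (n m E : ℕ)
    (P : (Fin n → F) ≃ₗ[F] (Fin n → F)) (Q : (Fin m → F) ≃ₗ[F] (Fin m → F))
    (U : Fin E → Submodule F (Fin n → F)) (U' : Submodule F (Fin n → F))
    (hindep : iSupIndep (Sum.elim U (fun _ : Unit => U')))
    (hsup : (⨆ i, Sum.elim U (fun _ : Unit => U') i) = ⊤)
    (s : Fin E → ℕ) (hs : ∀ i, 2 ≤ s i)
    (a : (i : Fin E) → Fin (s i) → (Fin n → F))
    (hind : ∀ i, LinearIndependent F (a i))
    (hspan : ∀ i, Submodule.span F (Set.range (a i)) = U i)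
    (hchain : ∀ i : Fin E, ∀ j : Fin (s i), ∀ h : j.1 + 1 < s i, P (a i j) = a i ⟨j.1 + 1, h⟩) :
    (Module.finrank F (fixSubmodule P Q) : ℤ)
      ≤ (n : ℤ) ^ 2 * m - (E : ℤ) * ((n : ℤ) - ∑ i, (s i : ℤ)) * m := by
  classical
  let x : Fin E → Fin n → F := fun i => a i ⟨0, by have := hs i; omega⟩
  let y : Fin E → Fin n → F := fun i => a i ⟨1, by have := hs i; omega⟩
  have haU : ∀ i j, a i j ∈ U i := fun i j => hspan i ▸ Submodule.subset_span ⟨j, rfl⟩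
  have hxy : LinearIndependent F (Sum.elim x y) :=
    (hindep.comp Sum.inl_injective).linearIndependent_sumElim hind haU _ _
      fun i => by simp [Fin.ext_iff]
  have hrank : ∀ i, Module.finrank F (U i) = s i := fun i => by
    rw [← hspan i, finrank_span_eq_card (hind i), Fintype.card_fin]
  have hdim := finrank_eq_sum_add_finrank_of_iSupIndep hindep hsup
  simp only [Module.finrank_fin_fun, hrank] at hdim
  have hbound := Submodule.finrank_add_finrank_le_of_le_ker
    (chainConstraint_surjective P.symm.toLinearMap Q.toLinearMap hxy U')
    (fixSubmodule_le_ker_chainConstraint P Q (fun i => hchain i _ _) U')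
  simp only [Module.finrank_pi_fintype, Module.finrank_linearMap, Module.finrank_tensorProduct,
    Module.finrank_self, mul_one, Finset.sum_const, Finset.card_univ, Fintype.card_fin,
    smul_eq_mul] at hbound
  zify at hdim hbound
  rw [show (n : ℤ) - ∑ i, (s i : ℤ) = Module.finrank F U' by linarith]
  linear_combination hbound

/-- if `F^n = U₁ ⊕ ⋯ ⊕ U_E ⊕ U′` with every summand `P`-invariant and each `U_i`
spanned by a chain of length `s_i ≥ 2` under `P`, then with `ℓ₀ = s_1 + ⋯ + s_E`,
`dim Fix(P,Q) ≤ n²m − E·(n−ℓ₀)·m`. -/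
theorem stmt_13 (F : Type) [Field F] [Fintype F] (n m E : ℕ)
    (P : (Fin n → F) ≃ₗ[F] (Fin n → F)) (Q : (Fin m → F) ≃ₗ[F] (Fin m → F))
    (U : Fin E → Submodule F (Fin n → F)) (U' : Submodule F (Fin n → F))
    (hindep : iSupIndep (Sum.elim U (fun _ : Unit => U')))
    (hsup : (⨆ i, Sum.elim U (fun _ : Unit => U') i) = ⊤)
    (hU : ∀ i : Fin E, ∀ x ∈ U i, P x ∈ U i)
    (hU' : ∀ x ∈ U', P x ∈ U')
    (s : Fin E → ℕ) (hs : ∀ i, 2 ≤ s i)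
    (a : (i : Fin E) → Fin (s i) → (Fin n → F))
    (hind : ∀ i, LinearIndependent F (a i))
    (hspan : ∀ i, Submodule.span F (Set.range (a i)) = U i)
    (hchain : ∀ i : Fin E, ∀ j : Fin (s i), ∀ h : j.1 + 1 < s i, P (a i j) = a i ⟨j.1 + 1, h⟩) :
    (Module.finrank F (fixSubmodule P Q) : ℤ)
      ≤ (n : ℤ) ^ 2 * m - (E : ℤ) * ((n : ℤ) - ∑ i, (s i : ℤ)) * m :=
  stmt_13_general F n m E P Q U U' hindep hsup s hs a hind hspan hchain
end

section
/- Let F be a finite field, n, m, E ∈ ℕ, and let P : F^n → F^n and Q : F^m → F^m be invertible F-linear maps. Suppose F^m = X₁ ⊕ ⋯ ⊕ X_E ⊕ X′ where each X_i and X′ is Q-invariant, and for each i ∈ {1,…,E} the subspace X_i has an ordered basis (b^{(i)}_1, …, b^{(i)}_{s_i}) with s_i ≥ 2 and Q(b^{(i)}_j) = b^{(i)}_{j+1} for all 1 ≤ j < s_i. Then the dimension of Fix(P,Q) is at most n²m − n²·E. -/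
/-!
A map `φ ∈ Fix(P,Q)` satisfies `φ ∘ (P ⊗ P) = Q ∘ φ`, so its image `S` satisfies `Q(S) = S`.
Let `U` be the span of the non-final chain vectors `b i j` (`j + 1 < s i`). If `S ≤ U`, then
`S = Q(S)` lies in the span of the chain vectors of height `≥ 1`, hence, by linear independence of
all the chain vectors together, in the span of the non-final ones of height `≥ 1`; iterating,
`S = 0`. So `φ ↦ φ mod U` is injective on `Fix(P,Q)`, and
`dim Fix(P,Q) ≤ n² · dim (F^m / U) = n² (m - ∑ (s i - 1)) ≤ n² (m - E)`.
-/

open TensorProduct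

open Submodule LinearMap Module

theorem LinearIndependent.span_image_inter {R M ι : Type*} [Ring R] [AddCommGroup M] [Module R M]
    {v : ι → M} (hv : LinearIndependent R v) (s t : Set ι) :
    span R (v '' (s ∩ t)) = span R (v '' s) ⊓ span R (v '' t) := by
  simp only [Finsupp.span_image_eq_map_linearCombination, Finsupp.supported_inter,
    Submodule.map_inf _ hv]

theorem linearIndependent_sigma_of_iSupIndep {R M η : Type*} [Ring R] [AddCommGroup M]
    [Module R M] {ιs : η → Type*} {f : ∀ j, ιs j → M} (hf : ∀ j, LinearIndependent R (f j))
    (hd : iSupIndep fun j => span R (Set.range (f j))) :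
    LinearIndependent R fun ji : Σ j, ιs j => f ji.1 ji.2 :=
  linearIndependent_iUnion_finite hf fun _ _ _ hi => hd.disjoint_biSup hi

theorem LinearIndependent.card_le_finrank_span_image {K M ι κ : Type*} [Field K]
    [AddCommGroup M] [Module K M] [FiniteDimensional K M] [Fintype κ] {v : ι → M}
    (hv : LinearIndependent K v) {A : Set ι} {f : κ → ι} (hf : Function.Injective f)
    (hfA : ∀ k, f k ∈ A) : Fintype.card κ ≤ finrank K (span K (v '' A)) :=
  calc Fintype.card κ = finrank K (span K (Set.range (v ∘ f))) :=
        (finrank_span_eq_card (hv.comp f hf)).symm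
    _ ≤ finrank K (span K (v '' A)) :=
        Submodule.finrank_mono <| span_mono <| Set.range_subset_iff.2 fun k => ⟨f k, hfA k, rfl⟩

theorem eq_bot_of_le_map_of_le_span_image {R M ι : Type*} [Ring R] [AddCommGroup M]
    [Module R M] {β : ι → M} (hβ : LinearIndependent R β) {Q : M →ₗ[R] M} {A : Set ι}
    (height : ι → ℕ) (hA : BddAbove (height '' A))
    (hQ : ∀ a ∈ A, ∃ a', height a < height a' ∧ Q (β a) = β a')
    {S : Submodule R M} (hSQ : S ≤ S.map Q) (hSA : S ≤ span R (β '' A)) : S = ⊥ := by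
  have hS : ∀ k, S ≤ span R (β '' (A ∩ {a | k ≤ height a})) := by
    intro k
    induction k with
    | zero => simpa using hSA
    | succ k ih =>
      have hshift :
          (span R (β '' (A ∩ {a | k ≤ height a}))).map Q
            ≤ span R (β '' {a | k + 1 ≤ height a}) := by
        rw [Submodule.map_span]
        refine span_mono ?_
        rintro _ ⟨_, ⟨a, ⟨haA, hka⟩, rfl⟩, rfl⟩
        obtain ⟨a', hlt, heq⟩ := hQ a haA
        exact ⟨a', (show k ≤ height a from hka).trans_lt hlt, heq.symm⟩
      rw [hβ.span_image_inter]
      exact le_inf hSA (hSQ.trans ((Submodule.map_mono ih).trans hshift))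
  obtain ⟨N, hN⟩ := hA
  have hempty : A ∩ {a | N + 1 ≤ height a} = ∅ :=
    Set.eq_empty_of_forall_notMem fun a ⟨ha, hNa⟩ =>
      Nat.not_succ_le_self N (hNa.trans (hN ⟨a, ha, rfl⟩))
  have hbot := hS (N + 1)
  rwa [hempty, Set.image_empty, span_empty, le_bot_iff] at hbot

theorem finrank_le_mul_finrank_quotient_of_range_le {K T W : Type*} [Field K] [AddCommGroup T]
    [Module K T] [FiniteDimensional K T] [AddCommGroup W] [Module K W] [FiniteDimensional K W]
    (Φ : Submodule K (T →ₗ[K] W)) (U : Submodule K W)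
    (hΦ : ∀ φ ∈ Φ, range φ ≤ U → φ = 0) :
    finrank K Φ ≤ finrank K T * finrank K (W ⧸ U) := by
  let restrict : Φ →ₗ[K] T →ₗ[K] W ⧸ U := (llcomp K T W (W ⧸ U) U.mkQ).comp Φ.subtype
  have hinj : Function.Injective restrict := by
    rw [← LinearMap.ker_eq_bot, Submodule.eq_bot_iff]
    intro φ hφ
    have hU : range φ.1 ≤ U := by
      rw [← U.ker_mkQ, range_le_ker_iff]
      exact hφ
    exact Subtype.ext (hΦ φ φ.2 hU)
  rw [← finrank_linearMap]
  exact finrank_le_finrank_of_injective hinj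

theorem map_range_eq_of_mem_fixSubmodule {F : Type*} [Field F] {n m : ℕ}
    {P : (Fin n → F) ≃ₗ[F] (Fin n → F)} {Q : (Fin m → F) ≃ₗ[F] (Fin m → F)}
    {φ : (Fin n → F) ⊗[F] (Fin n → F) →ₗ[F] (Fin m → F)} (hφ : φ ∈ fixSubmodule P Q) :
    (range φ).map (Q : (Fin m → F) →ₗ[F] (Fin m → F)) = range φ := by
  have hcomp : φ ∘ₗ (TensorProduct.congr P P).toLinearMap = Q ∘ₗ φ :=
    TensorProduct.ext' fun v w => hφ v w
  rw [← range_comp, ← hcomp, range_comp_of_range_eq_top _ (LinearEquiv.range _)]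

theorem stmt_14_general (F : Type) [Field F] (n m E : ℕ)
    (P : (Fin n → F) ≃ₗ[F] (Fin n → F)) (Q : (Fin m → F) ≃ₗ[F] (Fin m → F))
    (X : Fin E → Submodule F (Fin m → F)) (X' : Submodule F (Fin m → F))
    (hindep : iSupIndep (Sum.elim X (fun _ : Unit => X')))
    (s : Fin E → ℕ) (hs : ∀ i, 2 ≤ s i)
    (b : (i : Fin E) → Fin (s i) → (Fin m → F))
    (hind : ∀ i, LinearIndependent F (b i))
    (hspan : ∀ i, Submodule.span F (Set.range (b i)) = X i)
    (hchain : ∀ i : Fin E, ∀ j : Fin (s i), ∀ h : j.1 + 1 < s i, Q (b i j) = b i ⟨j.1 + 1, h⟩) :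
    (Module.finrank F (fixSubmodule P Q) : ℤ)
      ≤ (n : ℤ) ^ 2 * m - (n : ℤ) ^ 2 * E := by
  let β : (Σ i, Fin (s i)) → Fin m → F := fun a => b a.1 a.2
  let A : Set (Σ i, Fin (s i)) := {a | a.2.1 + 1 < s a.1}
  have hβ : LinearIndependent F β :=
    linearIndependent_sigma_of_iSupIndep hind <| by
      simpa only [funext hspan, Sum.elim_comp_inl] using hindep.comp Sum.inl_injective
  have hshift : ∀ a ∈ A, ∃ a', a.2.1 < a'.2.1 ∧ Q (β a) = β a' := fun a ha =>
    ⟨⟨a.1, ⟨a.2.1 + 1, ha⟩⟩, Nat.lt_succ_self _, hchain _ _ ha⟩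
  have hfix : ∀ φ ∈ fixSubmodule P Q, range φ ≤ span F (β '' A) → φ = 0 := fun φ hφ hA =>
    range_eq_bot.mp <| eq_bot_of_le_map_of_le_span_image hβ _ (Set.toFinite _).bddAbove hshift
      (map_range_eq_of_mem_fixSubmodule hφ).ge hA
  have hE : E ≤ finrank F (span F (β '' A)) := by
    simpa using hβ.card_le_finrank_span_image (f := fun i => ⟨i, ⟨0, by have := hs i; omega⟩⟩)
      (fun i j h => congrArg Sigma.fst h) hs
  have hdim := finrank_le_mul_finrank_quotient_of_range_le _ _ hfix
  have hquot := (span F (β '' A)).finrank_quotient_add_finrank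
  rw [Module.finrank_tensorProduct, Module.finrank_fin_fun] at hdim
  rw [Module.finrank_fin_fun] at hquot
  zify at hdim hquot hE
  nlinarith

/-- if `F^m = X₁ ⊕ ⋯ ⊕ X_E ⊕ X′` with every summand `Q`-invariant and each `X_i`
spanned by a chain of length `s_i ≥ 2` under `Q`, then `dim Fix(P,Q) ≤ n²m − n²·E`. -/
theorem stmt_14 (F : Type) [Field F] [Fintype F] (n m E : ℕ)
    (P : (Fin n → F) ≃ₗ[F] (Fin n → F)) (Q : (Fin m → F) ≃ₗ[F] (Fin m → F))
    (X : Fin E → Submodule F (Fin m → F)) (X' : Submodule F (Fin m → F))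
    (hindep : iSupIndep (Sum.elim X (fun _ : Unit => X')))
    (hsup : (⨆ i, Sum.elim X (fun _ : Unit => X') i) = ⊤)
    (hX : ∀ i : Fin E, ∀ x ∈ X i, Q x ∈ X i)
    (hX' : ∀ x ∈ X', Q x ∈ X')
    (s : Fin E → ℕ) (hs : ∀ i, 2 ≤ s i)
    (b : (i : Fin E) → Fin (s i) → (Fin m → F))
    (hind : ∀ i, LinearIndependent F (b i))
    (hspan : ∀ i, Submodule.span F (Set.range (b i)) = X i)
    (hchain : ∀ i : Fin E, ∀ j : Fin (s i), ∀ h : j.1 + 1 < s i, Q (b i j) = b i ⟨j.1 + 1, h⟩) :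
    (Module.finrank F (fixSubmodule P Q) : ℤ)
      ≤ (n : ℤ) ^ 2 * m - (n : ℤ) ^ 2 * E :=
  stmt_14_general F n m E P Q X X' hindep s hs b hind hspan hchain
end

section
/- Let F be a finite field, n, m, s, t, ℱ ∈ ℕ with ℱ ≤ s, and let P : F^n → F^n and Q : F^m → F^m be invertible F-linear maps. Suppose v₁, …, v_s ∈ F^n are linearly independent with P(v_i) = α_i v_i for scalars α_i ∈ F, w₁, …, w_t ∈ F^m are linearly independent with Q(w_k) = β_k w_k for scalars β_k ∈ F, and α₁, …, α_ℱ are pairwise distinct. Then the dimension of Fix(P,Q) is at most n²m − (ℱ−1)(s−ℱ)t. -/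
open TensorProduct

/-!
`Fix(P,Q)` is the kernel of `Ψ φ = Q ∘ φ - φ ∘ (P ⊗ P)`, so it suffices to bound the rank of `Ψ`
from below. With functionals `gᵢ`, `f_k` dual to the `vᵢ`, `w_k`, the maps
`x_{ijk} = (gᵢ ⊗ g_j)(·) • w_k` and the functionals `φ ↦ f_k (φ (vᵢ ⊗ v_j))` form a biorthogonal
system for `Ψ` with diagonal entries `β_k - αᵢ α_j`, so `rank Ψ` is at least the number of triples
with `αᵢ α_j ≠ β_k`. As `P` is invertible, every `α_j ≠ 0`, so for fixed `j, k` at most one of the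
distinct `α₁, …, α_ℱ` solves `αᵢ α_j = β_k`; this leaves at least `(min ℱ s - 1) s t` triples,
which dominates `(ℱ - 1)(s - ℱ) t`.
-/

open Finset Module LinearMap

section

variable {F : Type*} [Field F]

theorem LinearIndependent.exists_dual_family {V ι : Type*} [AddCommGroup V] [Module F V]
    [DecidableEq ι] {v : ι → V} (hv : LinearIndependent F v) :
    ∃ g : ι → Dual F V, ∀ i j, g i (v j) = if i = j then 1 else 0 := by
  obtain ⟨G, hG⟩ := LinearMap.exists_extend hv.repr
  refine ⟨fun i => Finsupp.lapply i ∘ₗ G, fun i j => ?_⟩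
  have hGv : G (v j) = Finsupp.single j 1 :=
    (LinearMap.congr_fun hG ⟨v j, Submodule.subset_span ⟨j, rfl⟩⟩).trans
      (hv.repr_eq_single j _ rfl)
  simp [hGv, Finsupp.single_apply, eq_comm]

theorem eigenvalue_ne_zero_of_injective {V : Type*} [AddCommGroup V] [Module F V]
    {P : V →ₗ[F] V} (hP : Function.Injective P) {x : V} (hx : x ≠ 0) {a : F}
    (h : P x = a • x) : a ≠ 0 := by
  rintro rfl
  exact hx (hP (by simpa using h))

theorem card_ne_zero_le_finrank_range_of_biorthogonal {M N ι : Type*} [AddCommGroup M] [Module F M]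
    [AddCommGroup N] [Module F N] [FiniteDimensional F N] [Fintype ι] [DecidableEq ι]
    [DecidableEq F] (Ψ : M →ₗ[F] N) (x : ι → M) (ℓ : ι → Dual F N) (c : ι → F)
    (h : ∀ p q, ℓ q (Ψ (x p)) = if p = q then c p else 0) :
    #{p | c p ≠ 0} ≤ finrank F (range Ψ) := by
  let y : {p // c p ≠ 0} → range Ψ := fun p => ⟨Ψ (x p), mem_range_self Ψ _⟩
  have hy : LinearIndependent F y := by
    refine .of_pairwise_dual_eq_zero_one y (fun q => (c q)⁻¹ • ℓ q ∘ₗ (range Ψ).subtype)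
      (fun q p hqp => ?_) (fun p => ?_)
    · simp [y, h, Subtype.coe_ne_coe.mpr hqp.symm]
    · simp [y, h, p.2]
  simpa [Fintype.card_subtype] using hy.fintype_card_le_finrank

section FixOperator

variable {V U : Type*} [AddCommGroup V] [Module F V] [AddCommGroup U] [Module F U]

def fixOperator (P : V →ₗ[F] V) (Q : U →ₗ[F] U) :
    (V ⊗[F] V →ₗ[F] U) →ₗ[F] (V ⊗[F] V →ₗ[F] U) :=
  llcomp F _ _ _ Q - lcomp F U (map P P)

@[simp]
theorem fixOperator_apply_tmul (P : V →ₗ[F] V) (Q : U →ₗ[F] U) (φ : V ⊗[F] V →ₗ[F] U)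
    (a b : V) : fixOperator P Q φ (a ⊗ₜ b) = Q (φ (a ⊗ₜ b)) - φ (P a ⊗ₜ P b) := by
  simp [fixOperator]

theorem card_mul_ne_le_finrank_range_fixOperator [FiniteDimensional F V]
    [FiniteDimensional F U] [DecidableEq F] {ι κ : Type*} [Fintype ι] [Fintype κ]
    {P : V →ₗ[F] V} {Q : U →ₗ[F] U} {v : ι → V} (hv : LinearIndependent F v) {α : ι → F}
    (hα : ∀ i, P (v i) = α i • v i) {w : κ → U} (hw : LinearIndependent F w) {β : κ → F}
    (hβ : ∀ k, Q (w k) = β k • w k) :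
    #{p : ι × ι × κ | α p.1 * α p.2.1 ≠ β p.2.2} ≤ finrank F (range (fixOperator P Q)) := by
  classical
  obtain ⟨g, hg⟩ := hv.exists_dual_family
  obtain ⟨f, hf⟩ := hw.exists_dual_family
  let x : ι × ι × κ → (V ⊗[F] V →ₗ[F] U) := fun p =>
    (lift ((mul F F).compl₁₂ (g p.1) (g p.2.1))).smulRight (w p.2.2)
  let ℓ : ι × ι × κ → Dual F (V ⊗[F] V →ₗ[F] U) := fun q =>
    f q.2.2 ∘ₗ applyₗ (v q.1 ⊗ₜ v q.2.1)
  have := card_ne_zero_le_finrank_range_of_biorthogonal (fixOperator P Q) x ℓ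
    (fun p => β p.2.2 - α p.1 * α p.2.1) ?_
  · simpa [sub_ne_zero, ne_comm] using this
  have hΨx : ∀ i j k a b, fixOperator P Q (x (i, j, k)) (v a ⊗ₜ v b) =
      (if i = a ∧ j = b then β k - α i * α j else 0) • w k := by
    intro i j k a b
    by_cases hij : i = a ∧ j = b
    · obtain ⟨rfl, rfl⟩ := hij
      simp [x, hα, hβ, hg, smul_smul, sub_smul, mul_comm]
    · rcases not_and_or.1 hij with h | h <;> simp [x, hα, hg, h]
  rintro ⟨i, j, k⟩ ⟨a, b, c⟩
  simp only [ℓ, coe_comp, Function.comp_apply, applyₗ_apply_apply, hΨx, map_smul, hf,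
    smul_eq_mul, Prod.mk.injEq]
  split_ifs <;> simp_all

end FixOperator

theorem fixSubmodule_eq_ker {n m : ℕ} (P : (Fin n → F) ≃ₗ[F] (Fin n → F))
    (Q : (Fin m → F) ≃ₗ[F] (Fin m → F)) :
    fixSubmodule P Q = ker (fixOperator P.toLinearMap Q.toLinearMap) := by
  ext φ
  rw [mem_ker]
  constructor
  · intro h
    refine TensorProduct.ext' fun a b => ?_
    simp [h a b]
  · intro h a b
    have hab := LinearMap.congr_fun h (a ⊗ₜ b)
    rw [fixOperator_apply_tmul, LinearMap.zero_apply, sub_eq_zero] at hab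
    exact hab.symm

theorem card_sub_one_le_card_filter_mul_ne {ι : Type*} [DecidableEq F] {α : ι → F}
    {A : Finset ι} (hA : Set.InjOn α A) {a : F} (ha : a ≠ 0) (b : F) :
    #A - 1 ≤ #{i ∈ A | α i * a ≠ b} := by
  have hle : #{i ∈ A | α i * a = b} ≤ 1 := by
    refine card_le_one.2 fun i hi j hj => ?_
    rw [mem_filter] at hi hj
    exact hA hi.1 hj.1 (mul_right_cancel₀ ha (hi.2.trans hj.2.symm))
  have := card_filter_add_card_filter_not (s := A) (fun i => α i * a = b)
  simp only [← ne_eq] at this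
  omega

theorem card_sub_one_mul_le_card_mul_ne {ι κ : Type*} [Fintype ι] [Fintype κ] [DecidableEq F]
    {α : ι → F} (hα : ∀ i, α i ≠ 0) (β : κ → F) {A : Finset ι} (hA : Set.InjOn α A) :
    (#A - 1) * Fintype.card ι * Fintype.card κ ≤ #{p : ι × ι × κ | α p.1 * α p.2.1 ≠ β p.2.2} :=
  calc (#A - 1) * Fintype.card ι * Fintype.card κ = ∑ _jk : ι × κ, (#A - 1) := by
        simp only [sum_const, card_univ, Fintype.card_prod, smul_eq_mul]
        ring
    _ ≤ ∑ jk : ι × κ, #{i ∈ A | α i * α jk.1 ≠ β jk.2} :=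
        sum_le_sum fun jk _ => card_sub_one_le_card_filter_mul_ne hA (hα jk.1) (β jk.2)
    _ ≤ ∑ jk : ι × κ, #{i | α i * α jk.1 ≠ β jk.2} :=
        sum_le_sum fun _ _ => card_le_card (filter_subset_filter _ (subset_univ A))
    _ = #{p : ι × ι × κ | α p.1 * α p.2.1 ≠ β p.2.2} := by
        symm
        rw [card_filter, Fintype.sum_prod_type, sum_comm]
        simp only [card_filter]

theorem finrank_tensor_square_linearMap (n m : ℕ) :
    finrank F ((Fin n → F) ⊗[F] (Fin n → F) →ₗ[F] (Fin m → F)) = n ^ 2 * m := by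
  simp [finrank_linearMap, finrank_tensorProduct, sq]

theorem sub_one_mul_sub_le_min_sub_one_mul (k s : ℕ) :
    ((k : ℤ) - 1) * ((s : ℤ) - k) ≤ ((min s k - 1 : ℕ) : ℤ) * s := by
  rcases Nat.lt_or_ge s k with h | h
  · have : ((k : ℤ) - 1) * (s - k) ≤ 0 := mul_nonpos_of_nonneg_of_nonpos (by omega) (by omega)
    exact this.trans (by positivity)
  · rcases Nat.eq_zero_or_pos k with rfl | hpos
    · simp
    · rw [min_eq_right h, Nat.cast_sub hpos]
      push_cast
      nlinarith

end

theorem stmt_15_general (F : Type) [Field F] (n m s t ℱ : ℕ)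
    (P : (Fin n → F) ≃ₗ[F] (Fin n → F)) (Q : (Fin m → F) ≃ₗ[F] (Fin m → F))
    (v : Fin s → (Fin n → F)) (hv : LinearIndependent F v)
    (α : Fin s → F) (hα : ∀ i, P (v i) = α i • v i)
    (w : Fin t → (Fin m → F)) (hw : LinearIndependent F w)
    (β : Fin t → F) (hβ : ∀ k, Q (w k) = β k • w k)
    (hdist : ∀ i j : Fin s, i.1 < ℱ → j.1 < ℱ → i ≠ j → α i ≠ α j) :
    (Module.finrank F (fixSubmodule P Q) : ℤ)
      ≤ (n : ℤ) ^ 2 * m - ((ℱ : ℤ) - 1) * ((s : ℤ) - ℱ) * t := by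
  classical
  have hα0 (i : Fin s) : α i ≠ 0 :=
    eigenvalue_ne_zero_of_injective P.injective (hv.ne_zero i) (hα i)
  have hinj : Set.InjOn α (({i | i < ℱ} : Finset (Fin s)) : Set (Fin s)) :=
    fun i hi j hj hij => by_contra fun hne =>
      hdist i j (by simpa using hi) (by simpa using hj) hne hij
  have hcount := card_sub_one_mul_le_card_mul_ne hα0 β hinj
  rw [Fin.card_filter_val_lt, Fintype.card_fin, Fintype.card_fin] at hcount
  have hrank := card_mul_ne_le_finrank_range_fixOperator
    (P := P.toLinearMap) (Q := Q.toLinearMap) hv hα hw hβ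
  have hrn := (fixOperator P.toLinearMap Q.toLinearMap).finrank_range_add_finrank_ker
  rw [finrank_tensor_square_linearMap, ← fixSubmodule_eq_ker] at hrn
  have harith := mul_le_mul_of_nonneg_right (sub_one_mul_sub_le_min_sub_one_mul ℱ s)
    (Int.natCast_nonneg t)
  zify at hcount hrank hrn
  linarith

/-- if `P` has linearly independent eigenvectors `v₁, …, v_s` with eigenvalues
`α₁, …, α_s`, `Q` has linearly independent eigenvectors `w₁, …, w_t` with eigenvalues
`β₁, …, β_t`, and `α₁, …, α_ℱ` are pairwise distinct (`ℱ ≤ s`), then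
`dim Fix(P,Q) ≤ n²m − (ℱ−1)(s−ℱ)t`. -/
theorem stmt_15 (F : Type) [Field F] [Fintype F] (n m s t ℱ : ℕ) (hℱ : ℱ ≤ s)
    (P : (Fin n → F) ≃ₗ[F] (Fin n → F)) (Q : (Fin m → F) ≃ₗ[F] (Fin m → F))
    (v : Fin s → (Fin n → F)) (hv : LinearIndependent F v)
    (α : Fin s → F) (hα : ∀ i, P (v i) = α i • v i)
    (w : Fin t → (Fin m → F)) (hw : LinearIndependent F w)
    (β : Fin t → F) (hβ : ∀ k, Q (w k) = β k • w k)
    (hdist : ∀ i j : Fin s, i.1 < ℱ → j.1 < ℱ → i ≠ j → α i ≠ α j) :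
    (Module.finrank F (fixSubmodule P Q) : ℤ)
      ≤ (n : ℤ) ^ 2 * m - ((ℱ : ℤ) - 1) * ((s : ℤ) - ℱ) * t :=
  stmt_15_general F n m s t ℱ P Q v hv α hα w hw β hβ hdist
end
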